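/- arXiv:2202.04379 — 4 statements merged into one kernel-verified Lean document; each statement's English description precedes it below -/
import Mathlib

section
/- Let α be a nonzero real number and let (λ¹_i)_{i∈ℕ} and (λ²_j)_{j∈ℕ} be strictly increasing sequences of real numbers. Then the set of real numbers s > 0 for which there exist pairs (i,j) ≠ (i',j') of natural numbers with λ¹_i + s^α λ²_j = λ¹_{i'} + s^α λ²_{j'} is at most countable. (Here s^α denotes the real power of the positive real s.) -/
/-- For any nonzero real `α` and strictly increasing sequences `λ¹`, `λ²` of reals, the
set of `s > 0` for which the family `(λ¹_i + s^α λ²_j)` has a collision (i.e. the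
minimal multiplicity property fails) is at most countable. -/
theorem countable_bad_scalings (α : ℝ) (hα : α ≠ 0)
    (lam₁ lam₂ : ℕ → ℝ) (h₁ : StrictMono lam₁) (h₂ : StrictMono lam₂) :
    Set.Countable {s : ℝ | 0 < s ∧ ∃ i j i' j' : ℕ, (i, j) ≠ (i', j') ∧
      lam₁ i + s ^ α * lam₂ j = lam₁ i' + s ^ α * lam₂ j'} := by
  have hsub : {s : ℝ | 0 < s ∧ ∃ i j i' j' : ℕ, (i, j) ≠ (i', j') ∧
      lam₁ i + s ^ α * lam₂ j = lam₁ i' + s ^ α * lam₂ j'} ⊆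
      ⋃ (p : ℕ × ℕ × ℕ × ℕ), {s : ℝ | 0 < s ∧ (p.1, p.2.1) ≠ (p.2.2.1, p.2.2.2) ∧
        lam₁ p.1 + s ^ α * lam₂ p.2.1 = lam₁ p.2.2.1 + s ^ α * lam₂ p.2.2.2} := by
    rintro s ⟨hs, i, j, i', j', hne, heq⟩
    exact Set.mem_iUnion.2 ⟨(i, j, i', j'), hs, hne, heq⟩
  refine Set.Countable.mono hsub (Set.countable_iUnion fun p => ?_)
  obtain ⟨i, j, i', j'⟩ := p
  apply Set.Subsingleton.countable
  rintro s ⟨hs, hne, hseq⟩ t ⟨ht, -, hteq⟩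
  simp only at hseq hteq
  -- j ≠ j'
  have hjj : j ≠ j' := by
    rintro rfl
    have : lam₁ i = lam₁ i' := by linarith
    exact hne (by rw [h₁.injective this])
  have hd : lam₂ j - lam₂ j' ≠ 0 := sub_ne_zero.2 fun h => hjj (h₂.injective h)
  have hst : s ^ α = t ^ α := by
    have hs' : s ^ α * (lam₂ j - lam₂ j') = lam₁ i' - lam₁ i := by ring_nf; linarith
    have ht' : t ^ α * (lam₂ j - lam₂ j') = lam₁ i' - lam₁ i := by ring_nf; linarith
    have := hs'.trans ht'.symm
    exact mul_right_cancel₀ hd this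
  have hlog : Real.log s = Real.log t := by
    have h1 := Real.log_rpow hs α
    have h2 := Real.log_rpow ht α
    have : α * Real.log s = α * Real.log t := by rw [← h1, ← h2, hst]
    exact mul_left_cancel₀ hα this
  calc s = Real.exp (Real.log s) := (Real.exp_log hs).symm
    _ = Real.exp (Real.log t) := by rw [hlog]
    _ = t := Real.exp_log ht
end

section
/- Let (X₁,ρ₁) and (X₂,ρ₂) be probability measure spaces, let m₁, m₂ be positive integers, let f_1, …, f_{m₁} be an orthonormal family of (measurable) functions in L²(X₁,ρ₁), and let e_1, …, e_{m₂} be an orthonormal family in L²(X₂,ρ₂). Let ω be a measurable subset of X₁ × X₂, and for x₁ ∈ X₁ let ω_{x₁} = {x₂ : (x₁,x₂) ∈ ω}. Let c₂ : X₁ → [0,∞) be a bounded measurable function such that for every x₁ ∈ X₁ and all complex coefficients b_1, …, b_{m₂}: ∫_{ω_{x₁}} |Σ_l b_l e_l(x₂)|² dρ₂(x₂) ≥ c₂(x₁) Σ_l |b_l|². Let c₁ ≥ 0 be such that for all complex coefficients b_1, …, b_{m₁}: ∫_{X₁} c₂(x₁) |Σ_k b_k f_k(x₁)|² dρ₁(x₁)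 ≥ c₁ Σ_k |b_k|². Then for all complex coefficients (a_{kl})_{1≤k≤m₁, 1≤l≤m₂}: ∫_ω |Σ_{k,l} a_{kl} f_k(x₁) e_l(x₂)|² d(ρ₁⊗ρ₂)(x₁,x₂) ≥ c₁ Σ_{k,l} |a_{kl}|². -/
open MeasureTheory Finset

/-!
Write the double sum as `∑ l, h_l(x₁) e_l(x₂)` with `h_l = ∑ k, a_{kl} f_k`. By Fubini, the
integral over `ω` is the integral in `x₁` of the integrals over the slices `ω_{x₁}`; the
observability of `e` on each slice bounds these below by `c₂(x₁) ∑ l, |h_l(x₁)|²`, and the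
`c₂`-weighted observability of `f`, applied to each column `(a_{kl})_k`, bounds the integral
of that by `c₁ ∑ k, ∑ l, |a_{kl}|²`.
-/

namespace MeasureTheory

variable {α β : Type*} [MeasurableSpace α] [MeasurableSpace β] {μ : Measure α} {ν : Measure β}

theorem MemLp.integrable_sq_norm {F : Type*} [NormedAddCommGroup F] {f : α → F}
    (hf : MemLp f 2 μ) : Integrable (fun x => ‖f x‖ ^ 2) μ :=
  (memLp_two_iff_integrable_sq_norm hf.aestronglyMeasurable).1 hf

theorem integral_le_setIntegral_prod_of_le_integral_slice [SFinite μ] [SFinite ν]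
    {ω : Set (α × β)} (hω : MeasurableSet ω) {g : α × β → ℝ} (hg : IntegrableOn g ω (μ.prod ν))
    {G : α → ℝ} (hG : Integrable G μ)
    (hGg : ∀ᵐ x ∂μ, G x ≤ ∫ y in {y | (x, y) ∈ ω}, g (x, y) ∂ν) :
    ∫ x, G x ∂μ ≤ ∫ p in ω, g p ∂(μ.prod ν) := by
  have hind : Integrable (ω.indicator g) (μ.prod ν) := (integrable_indicator_iff hω).2 hg
  have hslice (x : α) :
      ∫ y in {y | (x, y) ∈ ω}, g (x, y) ∂ν = ∫ y, ω.indicator g (x, y) ∂ν :=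
    (integral_indicator (measurable_prodMk_left hω)).symm
  rw [← integral_indicator hω, integral_prod _ hind]
  exact integral_mono_ae hG hind.integral_prod_left (hGg.mono fun x hx => hx.trans_eq (hslice x))

theorem MemLp.two_mul_prod {𝕜 : Type*} [NormedDivisionRing 𝕜] {f : α → 𝕜} {g : β → 𝕜}
    (hf : MemLp f 2 μ) (hg : MemLp g 2 ν) :
    MemLp (fun p : α × β => f p.1 * g p.2) 2 (μ.prod ν) := by
  refine (memLp_two_iff_integrable_sq_norm
    (hf.aestronglyMeasurable.comp_fst.mul hg.aestronglyMeasurable.comp_snd)).2 ?_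
  simpa only [Pi.mul_apply, norm_mul, mul_pow] using
    hf.integrable_sq_norm.mul_prod hg.integrable_sq_norm

end MeasureTheory

theorem fubini_observability_general
    {X₁ X₂ : Type*} [MeasurableSpace X₁] [MeasurableSpace X₂]
    (ρ₁ : Measure X₁) (ρ₂ : Measure X₂)
    [IsProbabilityMeasure ρ₁] [IsProbabilityMeasure ρ₂]
    (m₁ m₂ : ℕ)
    (f : Fin m₁ → X₁ → ℂ) (e : Fin m₂ → X₂ → ℂ)
    (hfL2 : ∀ k, MemLp (f k) 2 ρ₁) (heL2 : ∀ l, MemLp (e l) 2 ρ₂)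
    (ω : Set (X₁ × X₂)) (hω : MeasurableSet ω)
    (c₂ : X₁ → ℝ) (hc₂meas : Measurable c₂) (hc₂nonneg : ∀ x₁, 0 ≤ c₂ x₁)
    (hc₂bdd : ∃ C : ℝ, ∀ x₁, c₂ x₁ ≤ C)
    (hobs₂ : ∀ x₁ : X₁, ∀ b : Fin m₂ → ℂ,
      ∫ x₂ in {x₂ : X₂ | (x₁, x₂) ∈ ω}, ‖∑ l, b l * e l x₂‖ ^ 2 ∂ρ₂ ≥
        c₂ x₁ * ∑ l, ‖b l‖ ^ 2)
    (c₁ : ℝ)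
    (hobs₁ : ∀ b : Fin m₁ → ℂ,
      ∫ x₁, c₂ x₁ * ‖∑ k, b k * f k x₁‖ ^ 2 ∂ρ₁ ≥ c₁ * ∑ k, ‖b k‖ ^ 2) :
    ∀ a : Fin m₁ → Fin m₂ → ℂ,
      ∫ p in ω, ‖∑ k, ∑ l, a k l * f k p.1 * e l p.2‖ ^ 2 ∂(ρ₁.prod ρ₂) ≥
        c₁ * ∑ k, ∑ l, ‖a k l‖ ^ 2 := by
  intro a
  obtain ⟨C, hC⟩ := hc₂bdd
  set h : Fin m₂ → X₁ → ℂ := fun l x₁ => ∑ k, a k l * f k x₁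
  have hsum (p : X₁ × X₂) : ∑ k, ∑ l, a k l * f k p.1 * e l p.2 = ∑ l, h l p.1 * e l p.2 := by
    simp only [h, sum_mul]
    exact sum_comm
  have hhL2 (l : Fin m₂) : MemLp (h l) 2 ρ₁ :=
    memLp_finsetSum univ fun k _ => (hfL2 k).const_mul (a k l)
  have hSL2 : MemLp (fun p : X₁ × X₂ => ∑ l, h l p.1 * e l p.2) 2 (ρ₁.prod ρ₂) :=
    memLp_finsetSum univ fun l _ => (hhL2 l).two_mul_prod (heL2 l)
  have hweighted (l : Fin m₂) : Integrable (fun x₁ => c₂ x₁ * ‖h l x₁‖ ^ 2) ρ₁ :=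
    (hhL2 l).integrable_sq_norm.bdd_mul hc₂meas.aestronglyMeasurable
      (ae_of_all _ fun x₁ => by rw [Real.norm_of_nonneg (hc₂nonneg x₁)]; exact hC x₁)
  calc ∫ p in ω, ‖∑ k, ∑ l, a k l * f k p.1 * e l p.2‖ ^ 2 ∂(ρ₁.prod ρ₂)
      = ∫ p in ω, ‖∑ l, h l p.1 * e l p.2‖ ^ 2 ∂(ρ₁.prod ρ₂) := by simp only [hsum]
    _ ≥ ∫ x₁, ∑ l, c₂ x₁ * ‖h l x₁‖ ^ 2 ∂ρ₁ :=
        integral_le_setIntegral_prod_of_le_integral_slice hω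
          hSL2.integrable_sq_norm.integrableOn
          (integrable_finsetSum _ fun l _ => hweighted l)
          (ae_of_all _ fun x₁ => by rw [← mul_sum]; exact hobs₂ x₁ fun l => h l x₁)
    _ = ∑ l, ∫ x₁, c₂ x₁ * ‖h l x₁‖ ^ 2 ∂ρ₁ := integral_finsetSum _ fun l _ => hweighted l
    _ ≥ ∑ l, c₁ * ∑ k, ‖a k l‖ ^ 2 := sum_le_sum fun l _ => hobs₁ fun k => a k l
    _ = c₁ * ∑ k, ∑ l, ‖a k l‖ ^ 2 := by rw [← mul_sum, sum_comm]

/-- The core Fubini computation: if the vertical traces of `ω` observe the orthonormal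
family `e` with constant `c₂(x₁)`, and the weight `c₂` observes the orthonormal family
`f` with constant `c₁`, then `ω` observes the tensor products `f ⊗ e` with constant
`c₁`. -/
theorem fubini_observability
    {X₁ X₂ : Type*} [MeasurableSpace X₁] [MeasurableSpace X₂]
    (ρ₁ : Measure X₁) (ρ₂ : Measure X₂)
    [IsProbabilityMeasure ρ₁] [IsProbabilityMeasure ρ₂]
    (m₁ m₂ : ℕ) (hm₁ : 0 < m₁) (hm₂ : 0 < m₂)
    (f : Fin m₁ → X₁ → ℂ) (e : Fin m₂ → X₂ → ℂ)
    (hfmeas : ∀ k, Measurable (f k)) (hemeas : ∀ l, Measurable (e l))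
    (hfL2 : ∀ k, MemLp (f k) 2 ρ₁) (heL2 : ∀ l, MemLp (e l) 2 ρ₂)
    (hforth : ∀ k k' : Fin m₁,
      ∫ x, f k x * (starRingEnd ℂ) (f k' x) ∂ρ₁ = if k = k' then 1 else 0)
    (heorth : ∀ l l' : Fin m₂,
      ∫ x, e l x * (starRingEnd ℂ) (e l' x) ∂ρ₂ = if l = l' then 1 else 0)
    (ω : Set (X₁ × X₂)) (hω : MeasurableSet ω)
    (c₂ : X₁ → ℝ) (hc₂meas : Measurable c₂) (hc₂nonneg : ∀ x₁, 0 ≤ c₂ x₁)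
    (hc₂bdd : ∃ C : ℝ, ∀ x₁, c₂ x₁ ≤ C)
    (hobs₂ : ∀ x₁ : X₁, ∀ b : Fin m₂ → ℂ,
      ∫ x₂ in {x₂ : X₂ | (x₁, x₂) ∈ ω}, ‖∑ l, b l * e l x₂‖ ^ 2 ∂ρ₂ ≥
        c₂ x₁ * ∑ l, ‖b l‖ ^ 2)
    (c₁ : ℝ) (hc₁nonneg : 0 ≤ c₁)
    (hobs₁ : ∀ b : Fin m₁ → ℂ,
      ∫ x₁, c₂ x₁ * ‖∑ k, b k * f k x₁‖ ^ 2 ∂ρ₁ ≥ c₁ * ∑ k, ‖b k‖ ^ 2) :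
    ∀ a : Fin m₁ → Fin m₂ → ℂ,
      ∫ p in ω, ‖∑ k, ∑ l, a k l * f k p.1 * e l p.2‖ ^ 2 ∂(ρ₁.prod ρ₂) ≥
        c₁ * ∑ k, ∑ l, ‖a k l‖ ^ 2 :=
  fubini_observability_general ρ₁ ρ₂ m₁ m₂ f e hfL2 heL2 ω hω c₂ hc₂meas hc₂nonneg hc₂bdd hobs₂ c₁
    hobs₁
end

section
/- Let K be a field, V and W vector spaces over K, and f : V → V, g : W → W K-linear endomorphisms such that V is spanned by eigenvectors of f and W is spanned by eigenvectors of g (i.e. the supremum of all eigenspaces of f is V, and similarly for g). Let a₀ be an eigenvalue of f, b₀ an eigenvalue of g, and set μ = a₀ + b₀. Assume that for all eigenvalues a of f and b of g, a + b = μ implies a = a₀ and b = b₀. Then every z ∈ V ⊗_K W satisfying (f ⊗ id + id ⊗ g)(z) = μ·z also satisfies (f ⊗ id)(z) = a₀·z and (id ⊗ g)(z) = b₀·z. -/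
/-!
`V ⊗ W` is the sum of the subspaces `E_f(a) ⊗ E_g(b)`, and each of them lies in the
`(a + b)`-eigenspace of `f ⊗ id + id ⊗ g`. Since eigenspaces are independent, a
`μ`-eigenvector lies in the sum of those `E_f(a) ⊗ E_g(b)` with `a + b = μ`; by uniqueness of the
decomposition of `μ`, all of them except `E_f(a₀) ⊗ E_g(b₀)` vanish.
-/

open Module TensorProduct

namespace Module.End

variable {R M ι : Type*} [CommRing R] [AddCommGroup M] [Module R M]

theorem eigenspace_inf_eigenspace_le_add (F G : End R M) (a b : R) :
    F.eigenspace a ⊓ G.eigenspace b ≤ (F + G).eigenspace (a + b) := by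
  intro x hx
  obtain ⟨hF, hG⟩ := Submodule.mem_inf.mp hx
  rw [mem_eigenspace_iff] at hF hG ⊢
  rw [LinearMap.add_apply, hF, hG, add_smul]

/-- The component of `x ∈ ⨆ i, p i` along the `p i` with `c i ≠ μ` is a `μ`-eigenvector lying in
the sum of the other eigenspaces, hence zero. -/
theorem eigenspace_inf_iSup_le_of_le_eigenspace [IsDomain R] [IsTorsionFree R M] {T : End R M}
    {p : ι → Submodule R M} {c : ι → R} (hp : ∀ i, p i ≤ T.eigenspace (c i)) (μ : R) :
    T.eigenspace μ ⊓ ⨆ i, p i ≤ ⨆ (i) (_ : c i = μ), p i := by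
  rintro z ⟨hz, hz_mem⟩
  rw [iSup_split p (fun i ↦ c i = μ)] at hz_mem
  obtain ⟨x, hx, y, hy, rfl⟩ := Submodule.mem_sup.mp hz_mem
  have hx_eig : x ∈ T.eigenspace μ :=
    iSup₂_le (f := fun i (_ : c i = μ) ↦ p i) (fun i hi ↦ hi ▸ hp i) hx
  have hy_eig : y ∈ T.eigenspace μ := by simpa using sub_mem hz hx_eig
  have hy_other : y ∈ ⨆ (ν) (_ : ν ≠ μ), T.eigenspace ν :=
    iSup₂_le (fun i (hi : c i ≠ μ) ↦
      (hp i).trans (le_iSup₂ (f := fun ν _ ↦ T.eigenspace ν) (c i) hi)) hy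
  have hy_zero : y = 0 :=
    Submodule.disjoint_def.mp (iSupIndep_def.mp T.eigenspaces_iSupIndep μ) y hy_eig hy_other
  simpa [hy_zero] using hx

end Module.End

namespace TensorProduct

variable {R V W : Type*} [CommRing R] [AddCommGroup V] [Module R V] [AddCommGroup W] [Module R W]

theorem map₂_mk_eigenspace_le (f : End R V) (g : End R W) (a b : R) :
    Submodule.map₂ (mk R V W) (f.eigenspace a) (g.eigenspace b) ≤
      End.eigenspace (map f LinearMap.id) a ⊓ End.eigenspace (map LinearMap.id g) b := by
  refine Submodule.map₂_le.mpr fun v hv w hw ↦ Submodule.mem_inf.mpr ⟨?_, ?_⟩ <;>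
    rw [End.mem_eigenspace_iff] at hv hw ⊢
  · simp [hv, smul_tmul']
  · simp [hw, tmul_smul]

theorem iSup_map₂_mk_eigenspace_eq_top {f : End R V} {g : End R W}
    (hV : ⨆ a, f.eigenspace a = ⊤) (hW : ⨆ b, g.eigenspace b = ⊤) :
    ⨆ p : R × R, Submodule.map₂ (mk R V W) (f.eigenspace p.1) (g.eigenspace p.2) = ⊤ := by
  simp_rw [iSup_prod, ← Submodule.map₂_iSup_right, ← Submodule.map₂_iSup_left, hV, hW,
    map₂_mk_top_top_eq_top]

end TensorProduct

theorem tensor_eigenvector_of_unique_sum_general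
    {K : Type*} [Field K] {V W : Type*}
    [AddCommGroup V] [Module K V] [AddCommGroup W] [Module K W]
    (f : Module.End K V) (g : Module.End K W)
    (hV : (⨆ a : K, f.eigenspace a) = ⊤)
    (hW : (⨆ b : K, g.eigenspace b) = ⊤)
    (a₀ b₀ : K)
    (huniq : ∀ a b : K, f.HasEigenvalue a → g.HasEigenvalue b →
      a + b = a₀ + b₀ → a = a₀ ∧ b = b₀) :
    ∀ z : V ⊗[K] W,
      (TensorProduct.map f (LinearMap.id : W →ₗ[K] W) +
        TensorProduct.map (LinearMap.id : V →ₗ[K] V) g) z = (a₀ + b₀) • z →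
      TensorProduct.map f (LinearMap.id : W →ₗ[K] W) z = a₀ • z ∧
        TensorProduct.map (LinearMap.id : V →ₗ[K] V) g z = b₀ • z := by
  intro z hz
  set S : K × K → Submodule K (V ⊗[K] W) :=
    fun p ↦ Submodule.map₂ (mk K V W) (f.eigenspace p.1) (g.eigenspace p.2)
  have hS_eig (p : K × K) :
      S p ≤ End.eigenspace (map f LinearMap.id + map LinearMap.id g) (p.1 + p.2) :=
    (map₂_mk_eigenspace_le f g p.1 p.2).trans (End.eigenspace_inf_eigenspace_le_add _ _ _ _)
  have hz_mem : z ∈ ⨆ (p) (_ : p.1 + p.2 = a₀ + b₀), S p :=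
    End.eigenspace_inf_iSup_le_of_le_eigenspace hS_eig (a₀ + b₀)
      ⟨End.mem_eigenspace_iff.mpr hz, iSup_map₂_mk_eigenspace_eq_top hV hW ▸ Submodule.mem_top⟩
  have hS_le : ⨆ (p) (_ : p.1 + p.2 = a₀ + b₀), S p ≤ S (a₀, b₀) := by
    refine iSup₂_le fun ⟨a, b⟩ hab ↦ ?_
    rcases eq_or_ne (f.eigenspace a) ⊥ with ha | ha
    · simp [S, ha]
    rcases eq_or_ne (g.eigenspace b) ⊥ with hb | hb
    · simp [S, hb]
    obtain ⟨rfl, rfl⟩ :=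
      huniq a b (End.hasEigenvalue_iff.mpr ha) (End.hasEigenvalue_iff.mpr hb) hab
    exact le_rfl
  obtain ⟨hFz, hGz⟩ := map₂_mk_eigenspace_le f g a₀ b₀ (hS_le hz_mem)
  exact ⟨End.mem_eigenspace_iff.mp hFz, End.mem_eigenspace_iff.mp hGz⟩

/-- If `V` and `W` are spanned by eigenvectors of `f` and `g` respectively, and
`μ = a₀ + b₀` admits the unique decomposition `a₀ + b₀` as a sum of an eigenvalue of `f`
and an eigenvalue of `g`, then every `μ`-eigenvector of `f ⊗ id + id ⊗ g` is an
`a₀`-eigenvector of `f ⊗ id` and a `b₀`-eigenvector of `id ⊗ g`. -/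
theorem tensor_eigenvector_of_unique_sum
    {K : Type*} [Field K] {V W : Type*}
    [AddCommGroup V] [Module K V] [AddCommGroup W] [Module K W]
    (f : Module.End K V) (g : Module.End K W)
    (hV : (⨆ a : K, f.eigenspace a) = ⊤)
    (hW : (⨆ b : K, g.eigenspace b) = ⊤)
    (a₀ b₀ : K) (ha₀ : f.HasEigenvalue a₀) (hb₀ : g.HasEigenvalue b₀)
    (huniq : ∀ a b : K, f.HasEigenvalue a → g.HasEigenvalue b →
      a + b = a₀ + b₀ → a = a₀ ∧ b = b₀) :
    ∀ z : V ⊗[K] W,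
      (TensorProduct.map f (LinearMap.id : W →ₗ[K] W) +
        TensorProduct.map (LinearMap.id : V →ₗ[K] V) g) z = (a₀ + b₀) • z →
      TensorProduct.map f (LinearMap.id : W →ₗ[K] W) z = a₀ • z ∧
        TensorProduct.map (LinearMap.id : V →ₗ[K] V) g z = b₀ • z :=
  tensor_eigenvector_of_unique_sum_general f g hV hW a₀ b₀ huniq
end

section
/- No condition (MM) is assumed. (a) If μ₁ is a QL of X₁ and μ₂ is a QL of X₂, then the product measure μ₁ ⊗ μ₂ is a QL of the product X = X₁ × X₂. (b) For every index i, every eigenfunction ψ of X₁ with eigenvalue λ¹_i and ‖ψ‖_{L²(X₁,ρ₁)} = 1, and every QL μ₂ of X₂, the measure (|ψ|²ρ₁) ⊗ μ₂ is a QL of the product. -/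
open MeasureTheory ENNReal Filter

noncomputable section

/-- Spectral data on a measure space: a strictly increasing sequence of (distinct)
eigenvalues tending to `+∞`, multiplicities, and for each eigenvalue an orthonormal
family of eigenfunctions in `L²`. -/
structure SpectralData {X : Type*} [MeasurableSpace X] (ρ : Measure X) where
  lam : ℕ → ℝ
  lam_strictMono : StrictMono lam
  lam_tendsto : Tendsto lam atTop atTop
  m : ℕ → ℕ
  m_pos : ∀ i, 0 < m i
  phi : (i : ℕ) → Fin (m i) → X → ℂ
  phi_measurable : ∀ i k, Measurable (phi i k)
  phi_memLp : ∀ i k, MemLp (phi i k) 2 ρ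
  phi_orthonormal : ∀ i (k k' : Fin (m i)),
    ∫ x, phi i k x * (starRingEnd ℂ) (phi i k' x) ∂ρ = if k = k' then 1 else 0

namespace SpectralData

variable {X X₁ X₂ : Type*} [MeasurableSpace X] [MeasurableSpace X₁] [MeasurableSpace X₂]
  {ρ : Measure X} {ρ₁ : Measure X₁} {ρ₂ : Measure X₂}

/-- An eigenfunction with eigenvalue `lam i`: a nonzero element of the span of the
orthonormal family attached to the index `i`. -/
def IsEigen (D : SpectralData ρ) (i : ℕ) (f : X → ℂ) : Prop :=
  ∃ a : Fin (D.m i) → ℂ, a ≠ 0 ∧ f = fun x => ∑ k, a k * D.phi i k x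

/-- An eigenfunction (of some eigenvalue). -/
def IsEigenfunction (D : SpectralData ρ) (f : X → ℂ) : Prop :=
  ∃ i, D.IsEigen i f

/-- `f` has norm one in `L²(X, ρ)`. -/
def Normalized (ρ : Measure X) (f : X → ℂ) : Prop :=
  ∫⁻ x, (‖f x‖₊ : ℝ≥0∞) ^ 2 ∂ρ = 1

/-- The spectral functional `g_X(a)`: the infimum of `∫ a |φ|² dρ` (as a lower
integral) over all normalized eigenfunctions `φ`. -/
def g (D : SpectralData ρ) (a : X → ℝ≥0∞) : ℝ≥0∞ :=
  ⨅ f : {f : X → ℂ // D.IsEigenfunction f ∧ Normalized ρ f},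
    ∫⁻ x, a x * (‖f.1 x‖₊ : ℝ≥0∞) ^ 2 ∂ρ

/-- `g_X(S) = g_X(𝟙_S)`. -/
def gSet (D : SpectralData ρ) (S : Set X) : ℝ≥0∞ :=
  D.g (S.indicator fun _ => 1)

/-- A (local) quantum limit: a Borel probability measure that is a weak limit of the
measures `|ψ_n|² ρ` for normalized eigenfunctions `ψ_n` whose eigenvalue indices tend
to infinity. -/
def IsQL [TopologicalSpace X] (D : SpectralData ρ) (μ : Measure X) : Prop :=
  IsProbabilityMeasure μ ∧
  ∃ (idx : ℕ → ℕ) (ψ : ℕ → X → ℂ),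
    Tendsto idx atTop atTop ∧
    (∀ n, D.IsEigen (idx n) (ψ n)) ∧
    (∀ n, Normalized ρ (ψ n)) ∧
    ∀ f : C(X, ℝ), Tendsto (fun n => ∫ x, f x * ‖ψ n x‖ ^ 2 ∂ρ) atTop (nhds (∫ x, f x ∂μ))

/-- An eigenfunction of the product with eigenvalue `lam¹ i + lam² j`: a nonzero element
of the span of the products `φ¹_{i,k}(x₁) φ²_{j,l}(x₂)`. -/
def IsProdEigen (D₁ : SpectralData ρ₁) (D₂ : SpectralData ρ₂) (i j : ℕ)
    (f : X₁ × X₂ → ℂ) : Prop :=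
  ∃ a : Fin (D₁.m i) → Fin (D₂.m j) → ℂ, a ≠ 0 ∧
    f = fun p => ∑ k, ∑ l, a k l * D₁.phi i k p.1 * D₂.phi j l p.2

/-- The spectral functional `g_X` on the product `X = X₁ × X₂`. -/
def gProd (D₁ : SpectralData ρ₁) (D₂ : SpectralData ρ₂) (a : X₁ × X₂ → ℝ≥0∞) : ℝ≥0∞ :=
  ⨅ f : {f : X₁ × X₂ → ℂ //
      (∃ i j, IsProdEigen D₁ D₂ i j f) ∧ Normalized (ρ₁.prod ρ₂) f},
    ∫⁻ x, a x * (‖f.1 x‖₊ : ℝ≥0∞) ^ 2 ∂(ρ₁.prod ρ₂)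

/-- `g_X(S)` on the product. -/
def gProdSet (D₁ : SpectralData ρ₁) (D₂ : SpectralData ρ₂) (S : Set (X₁ × X₂)) : ℝ≥0∞ :=
  gProd D₁ D₂ (S.indicator fun _ => 1)

/-- A quantum limit of the product: a weak limit of the measures `|φ_n|² (ρ₁ ⊗ ρ₂)` for
normalized eigenfunctions `φ_n` of the product whose eigenvalues `λ¹_{i_n} + λ²_{j_n}`
tend to `+∞`. -/
def IsProdQL [TopologicalSpace X₁] [TopologicalSpace X₂]
    (D₁ : SpectralData ρ₁) (D₂ : SpectralData ρ₂) (μ : Measure (X₁ × X₂)) : Prop :=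
  IsProbabilityMeasure μ ∧
  ∃ (idx₁ idx₂ : ℕ → ℕ) (ψ : ℕ → X₁ × X₂ → ℂ),
    Tendsto (fun n => D₁.lam (idx₁ n) + D₂.lam (idx₂ n)) atTop atTop ∧
    (∀ n, IsProdEigen D₁ D₂ (idx₁ n) (idx₂ n) (ψ n)) ∧
    (∀ n, Normalized (ρ₁.prod ρ₂) (ψ n)) ∧
    ∀ f : C(X₁ × X₂, ℝ),
      Tendsto (fun n => ∫ x, f x * ‖ψ n x‖ ^ 2 ∂(ρ₁.prod ρ₂)) atTop (nhds (∫ x, f x ∂μ))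

/-- Condition (MM): the map `(i, j) ↦ λ¹_i + λ²_j` is injective. -/
def MM (D₁ : SpectralData ρ₁) (D₂ : SpectralData ρ₂) : Prop :=
  Function.Injective fun p : ℕ × ℕ => D₁.lam p.1 + D₂.lam p.2

end SpectralData

/-!
If `ψ₁` and `ψ₂` are normalized eigenfunctions of `X₁` and `X₂` with eigenvalues `λ¹_i`, `λ²_j`,
then `ψ₁ ⊗ ψ₂` is a normalized eigenfunction of the product with eigenvalue `λ¹_i + λ²_j`, and
`|ψ₁ ⊗ ψ₂|² ρ = (|ψ₁|² ρ₁) ⊗ (|ψ₂|² ρ₂)`. Since the product of probability measures is continuous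
for the weak topology, tensoring two weakly convergent sequences of eigenfunctions gives a
weakly convergent sequence on the product. For (b), use the constant sequence `ψ` in the first
factor: the sum of eigenvalues still tends to infinity because the second one does.
-/

open Topology TopologicalSpace

namespace MeasureTheory.ProbabilityMeasure

variable {X : Type*} [TopologicalSpace X] [CompactSpace X] [MeasurableSpace X]
  [OpensMeasurableSpace X]

theorem tendsto_iff_forall_continuousMap_integral_tendsto {ι : Type*} {l : Filter ι}
    {μs : ι → ProbabilityMeasure X} {μ : ProbabilityMeasure X} :
    Tendsto μs l (𝓝 μ) ↔
      ∀ f : C(X, ℝ), Tendsto (fun i ↦ ∫ x, f x ∂(μs i : Measure X)) l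
        (𝓝 (∫ x, f x ∂(μ : Measure X))) := by
  rw [tendsto_iff_forall_integral_tendsto]
  exact ⟨fun h f ↦ h (.mkOfCompact f), fun h f ↦ h f.toContinuousMap⟩

end MeasureTheory.ProbabilityMeasure

theorem tendsto_integral_prod_of_tendsto {ι : Type*} {l : Filter ι}
    {X₁ X₂ : Type*} [TopologicalSpace X₁] [CompactSpace X₁] [SecondCountableTopology X₁]
    [PseudoMetrizableSpace X₁] [MeasurableSpace X₁] [OpensMeasurableSpace X₁]
    [TopologicalSpace X₂] [CompactSpace X₂] [SecondCountableTopology X₂]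
    [PseudoMetrizableSpace X₂] [MeasurableSpace X₂] [OpensMeasurableSpace X₂]
    {ν₁ : ι → Measure X₁} {ν₂ : ι → Measure X₂} {μ₁ : Measure X₁} {μ₂ : Measure X₂}
    [∀ i, IsProbabilityMeasure (ν₁ i)] [∀ i, IsProbabilityMeasure (ν₂ i)]
    [IsProbabilityMeasure μ₁] [IsProbabilityMeasure μ₂]
    (h₁ : ∀ g : C(X₁, ℝ), Tendsto (fun i ↦ ∫ x, g x ∂ν₁ i) l (𝓝 (∫ x, g x ∂μ₁)))
    (h₂ : ∀ g : C(X₂, ℝ), Tendsto (fun i ↦ ∫ x, g x ∂ν₂ i) l (𝓝 (∫ x, g x ∂μ₂)))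
    (f : C(X₁ × X₂, ℝ)) :
    Tendsto (fun i ↦ ∫ p, f p ∂(ν₁ i).prod (ν₂ i)) l (𝓝 (∫ p, f p ∂μ₁.prod μ₂)) := by
  let P₁ : ι → ProbabilityMeasure X₁ := fun i ↦ ⟨ν₁ i, inferInstance⟩
  let P₂ : ι → ProbabilityMeasure X₂ := fun i ↦ ⟨ν₂ i, inferInstance⟩
  have hP₁ : Tendsto P₁ l (𝓝 ⟨μ₁, inferInstance⟩) :=
    ProbabilityMeasure.tendsto_iff_forall_continuousMap_integral_tendsto.2 h₁
  have hP₂ : Tendsto P₂ l (𝓝 ⟨μ₂, inferInstance⟩) :=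
    ProbabilityMeasure.tendsto_iff_forall_continuousMap_integral_tendsto.2 h₂
  exact ProbabilityMeasure.tendsto_iff_forall_continuousMap_integral_tendsto.1
    ((ProbabilityMeasure.continuous_prod.tendsto _).comp (hP₁.prodMk_nhds hP₂)) f

section SquareDensity

variable {X : Type*} [MeasurableSpace X] {ρ : Measure X} {ψ : X → ℂ}

theorem integral_withDensity_sq_nnnorm (hψ : Measurable ψ) (g : X → ℝ) :
    ∫ x, g x ∂(ρ.withDensity fun x ↦ (‖ψ x‖₊ : ℝ≥0∞) ^ 2) = ∫ x, g x * ‖ψ x‖ ^ 2 ∂ρ := by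
  have h : (fun x ↦ (‖ψ x‖₊ : ℝ≥0∞) ^ 2) = fun x ↦ ((‖ψ x‖₊ ^ 2 : NNReal) : ℝ≥0∞) := by
    simp
  rw [h, integral_withDensity_eq_integral_smul (by fun_prop)]
  simp [NNReal.smul_def, mul_comm]

theorem SpectralData.Normalized.isProbabilityMeasure_withDensity
    (h : SpectralData.Normalized ρ ψ) :
    IsProbabilityMeasure (ρ.withDensity fun x ↦ (‖ψ x‖₊ : ℝ≥0∞) ^ 2) :=
  ⟨by rwa [withDensity_apply _ MeasurableSet.univ, setLIntegral_univ]⟩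

end SquareDensity

namespace SpectralData

variable {X₁ X₂ : Type*} [MeasurableSpace X₁] [MeasurableSpace X₂]
  {ρ₁ : Measure X₁} {ρ₂ : Measure X₂} {D₁ : SpectralData ρ₁} {D₂ : SpectralData ρ₂}

theorem IsEigen.measurable {i : ℕ} {ψ : X₁ → ℂ} (h : D₁.IsEigen i ψ) : Measurable ψ := by
  obtain ⟨a, -, rfl⟩ := h
  exact Finset.measurable_sum _ fun k _ ↦ (D₁.phi_measurable i k).const_mul _

theorem IsEigen.prod {i j : ℕ} {ψ₁ : X₁ → ℂ} {ψ₂ : X₂ → ℂ}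
    (h₁ : D₁.IsEigen i ψ₁) (h₂ : D₂.IsEigen j ψ₂) :
    IsProdEigen D₁ D₂ i j fun p ↦ ψ₁ p.1 * ψ₂ p.2 := by
  obtain ⟨a₁, ha₁, rfl⟩ := h₁
  obtain ⟨a₂, ha₂, rfl⟩ := h₂
  refine ⟨fun k l ↦ a₁ k * a₂ l, fun h ↦ ?_, ?_⟩
  · obtain ⟨k, hk⟩ := Function.ne_iff.mp ha₁
    obtain ⟨l, hl⟩ := Function.ne_iff.mp ha₂
    exact mul_ne_zero hk hl (congrFun (congrFun h k) l)
  · ext p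
    simp only [Finset.sum_mul_sum]
    exact Finset.sum_congr rfl fun k _ ↦ Finset.sum_congr rfl fun l _ ↦ by ring

theorem withDensity_sq_nnnorm_prod [SFinite ρ₂] {ψ₁ : X₁ → ℂ} {ψ₂ : X₂ → ℂ}
    (hψ₁ : Measurable ψ₁) (hψ₂ : Measurable ψ₂) :
    (ρ₁.withDensity fun x ↦ (‖ψ₁ x‖₊ : ℝ≥0∞) ^ 2).prod
        (ρ₂.withDensity fun y ↦ (‖ψ₂ y‖₊ : ℝ≥0∞) ^ 2) =
      (ρ₁.prod ρ₂).withDensity fun p ↦ (‖ψ₁ p.1 * ψ₂ p.2‖₊ : ℝ≥0∞) ^ 2 := by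
  rw [prod_withDensity (by fun_prop) (by fun_prop)]
  simp only [nnnorm_mul, ENNReal.coe_mul, mul_pow]

theorem Normalized.prod [SFinite ρ₂] {ψ₁ : X₁ → ℂ} {ψ₂ : X₂ → ℂ}
    (hψ₁ : Measurable ψ₁) (hψ₂ : Measurable ψ₂)
    (h₁ : Normalized ρ₁ ψ₁) (h₂ : Normalized ρ₂ ψ₂) :
    Normalized (ρ₁.prod ρ₂) fun p ↦ ψ₁ p.1 * ψ₂ p.2 := by
  unfold Normalized at *
  simp only [nnnorm_mul, ENNReal.coe_mul, mul_pow]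
  rw [lintegral_prod_mul (f := fun x ↦ (‖ψ₁ x‖₊ : ℝ≥0∞) ^ 2)
    (g := fun y ↦ (‖ψ₂ y‖₊ : ℝ≥0∞) ^ 2) (by fun_prop) (by fun_prop), h₁, h₂, one_mul]

end SpectralData

open SpectralData in
theorem isProdQL_prod_of_tendsto
    {X₁ X₂ : Type*} [TopologicalSpace X₁] [CompactSpace X₁] [SecondCountableTopology X₁]
    [PseudoMetrizableSpace X₁] [MeasurableSpace X₁] [OpensMeasurableSpace X₁]
    [TopologicalSpace X₂] [CompactSpace X₂] [SecondCountableTopology X₂]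
    [PseudoMetrizableSpace X₂] [MeasurableSpace X₂] [OpensMeasurableSpace X₂]
    {ρ₁ : Measure X₁} {ρ₂ : Measure X₂} [SFinite ρ₂]
    {D₁ : SpectralData ρ₁} {D₂ : SpectralData ρ₂}
    {idx₁ idx₂ : ℕ → ℕ} {ψ₁ : ℕ → X₁ → ℂ} {ψ₂ : ℕ → X₂ → ℂ}
    {μ₁ : Measure X₁} {μ₂ : Measure X₂} [IsProbabilityMeasure μ₁] [IsProbabilityMeasure μ₂]
    (hlam : Tendsto (fun n ↦ D₁.lam (idx₁ n) + D₂.lam (idx₂ n)) atTop atTop)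
    (he₁ : ∀ n, D₁.IsEigen (idx₁ n) (ψ₁ n)) (he₂ : ∀ n, D₂.IsEigen (idx₂ n) (ψ₂ n))
    (hn₁ : ∀ n, Normalized ρ₁ (ψ₁ n)) (hn₂ : ∀ n, Normalized ρ₂ (ψ₂ n))
    (hw₁ : ∀ g : C(X₁, ℝ),
      Tendsto (fun n ↦ ∫ x, g x * ‖ψ₁ n x‖ ^ 2 ∂ρ₁) atTop (𝓝 (∫ x, g x ∂μ₁)))
    (hw₂ : ∀ g : C(X₂, ℝ),
      Tendsto (fun n ↦ ∫ x, g x * ‖ψ₂ n x‖ ^ 2 ∂ρ₂) atTop (𝓝 (∫ x, g x ∂μ₂))) :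
    IsProdQL D₁ D₂ (μ₁.prod μ₂) := by
  have hm₁ n := (he₁ n).measurable
  have hm₂ n := (he₂ n).measurable
  have hν₁ n := (hn₁ n).isProbabilityMeasure_withDensity
  have hν₂ n := (hn₂ n).isProbabilityMeasure_withDensity
  refine ⟨inferInstance, idx₁, idx₂, fun n p ↦ ψ₁ n p.1 * ψ₂ n p.2, hlam,
    fun n ↦ (he₁ n).prod (he₂ n), fun n ↦ (hn₁ n).prod (hm₁ n) (hm₂ n) (hn₂ n), fun f ↦ ?_⟩
  refine (tendsto_integral_prod_of_tendsto
    (ν₁ := fun n ↦ ρ₁.withDensity fun x ↦ (‖ψ₁ n x‖₊ : ℝ≥0∞) ^ 2)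
    (ν₂ := fun n ↦ ρ₂.withDensity fun y ↦ (‖ψ₂ n y‖₊ : ℝ≥0∞) ^ 2)
    (fun g ↦ ?_) (fun g ↦ ?_) f).congr fun n ↦ ?_
  · simpa only [integral_withDensity_sq_nnnorm (hm₁ _)] using hw₁ g
  · simpa only [integral_withDensity_sq_nnnorm (hm₂ _)] using hw₂ g
  · rw [withDensity_sq_nnnorm_prod (hm₁ n) (hm₂ n)]
    exact integral_withDensity_sq_nnnorm (by fun_prop) f

open SpectralData in
theorem prod_ql_of_ql_general
    {X₁ X₂ : Type*}
    [MetricSpace X₁] [CompactSpace X₁] [MeasurableSpace X₁] [BorelSpace X₁]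
    [MetricSpace X₂] [CompactSpace X₂] [MeasurableSpace X₂] [BorelSpace X₂]
    (ρ₁ : Measure X₁) (ρ₂ : Measure X₂)
    [IsProbabilityMeasure ρ₂]
    (D₁ : SpectralData ρ₁) (D₂ : SpectralData ρ₂) :
    (∀ (μ₁ : Measure X₁) (μ₂ : Measure X₂), D₁.IsQL μ₁ → D₂.IsQL μ₂ →
      IsProdQL D₁ D₂ (μ₁.prod μ₂)) ∧
    (∀ (i : ℕ) (ψ : X₁ → ℂ), D₁.IsEigen i ψ → Normalized ρ₁ ψ →
      ∀ μ₂ : Measure X₂, D₂.IsQL μ₂ →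
        IsProdQL D₁ D₂
          ((ρ₁.withDensity fun x => (‖ψ x‖₊ : ℝ≥0∞) ^ 2).prod μ₂)) := by
  refine ⟨?_, ?_⟩
  · rintro μ₁ μ₂ ⟨_, idx₁, ψ₁, hidx₁, he₁, hn₁, hw₁⟩ ⟨_, idx₂, ψ₂, hidx₂, he₂, hn₂, hw₂⟩
    exact isProdQL_prod_of_tendsto
      ((D₁.lam_tendsto.comp hidx₁).atTop_add_atTop (D₂.lam_tendsto.comp hidx₂))
      he₁ he₂ hn₁ hn₂ hw₁ hw₂
  · rintro i ψ hψ hnψ μ₂ ⟨_, idx₂, ψ₂, hidx₂, he₂, hn₂, hw₂⟩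
    have := hnψ.isProbabilityMeasure_withDensity
    refine isProdQL_prod_of_tendsto (idx₁ := fun _ ↦ i) (ψ₁ := fun _ ↦ ψ)
      (tendsto_atTop_add_const_left _ _ (D₂.lam_tendsto.comp hidx₂))
      (fun _ ↦ hψ) he₂ (fun _ ↦ hnψ) hn₂ (fun g ↦ ?_) hw₂
    rw [integral_withDensity_sq_nnnorm hψ.measurable]
    exact tendsto_const_nhds

open SpectralData in
/-- Without assuming (MM): (a) the product of a quantum limit of `X₁` and a quantum
limit of `X₂` is a quantum limit of the product; (b) for any fixed normalized
eigenfunction `ψ` of `X₁` and any quantum limit `μ₂` of `X₂`, the measure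
`(|ψ|²ρ₁) ⊗ μ₂` is a quantum limit of the product. -/
theorem prod_ql_of_ql
    {X₁ X₂ : Type*}
    [MetricSpace X₁] [CompactSpace X₁] [MeasurableSpace X₁] [BorelSpace X₁]
    [MetricSpace X₂] [CompactSpace X₂] [MeasurableSpace X₂] [BorelSpace X₂]
    (ρ₁ : Measure X₁) (ρ₂ : Measure X₂)
    [IsProbabilityMeasure ρ₁] [IsProbabilityMeasure ρ₂]
    (D₁ : SpectralData ρ₁) (D₂ : SpectralData ρ₂) :
    (∀ (μ₁ : Measure X₁) (μ₂ : Measure X₂), D₁.IsQL μ₁ → D₂.IsQL μ₂ →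
      IsProdQL D₁ D₂ (μ₁.prod μ₂)) ∧
    (∀ (i : ℕ) (ψ : X₁ → ℂ), D₁.IsEigen i ψ → Normalized ρ₁ ψ →
      ∀ μ₂ : Measure X₂, D₂.IsQL μ₂ →
        IsProdQL D₁ D₂
          ((ρ₁.withDensity fun x => (‖ψ x‖₊ : ℝ≥0∞) ^ 2).prod μ₂)) :=
  prod_ql_of_ql_general ρ₁ ρ₂ D₁ D₂
end
end
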